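/- arXiv:2207.05119 — 2 statements merged into one kernel-verified Lean document; each statement's English description precedes it below -/
import Mathlib

section
/- A permutation w is boolean (i.e., some reduced word of w has all distinct letters) if and only if every reduced word of w has all distinct letters. -/
/-- The simple transposition `s_i` in `S_n`, swapping positions `i` and `i+1`
(1-indexed, so valid for `1 ≤ i ≤ n-1`); otherwise the identity. -/
def simpleT (n : ℕ) (i : ℕ) : Equiv.Perm (Fin n) :=
  if h : 1 ≤ i ∧ i < n then Equiv.swap ⟨i - 1, by omega⟩ ⟨i, h.2⟩ else 1

/-- `l` is a word in the simple transpositions `s_1, …, s_{n-1}` with product `w`. -/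
def IsWord (n : ℕ) (w : Equiv.Perm (Fin n)) (l : List ℕ) : Prop :=
  (∀ i ∈ l, 1 ≤ i ∧ i < n) ∧ (l.map (simpleT n)).prod = w

/-- The Coxeter length of `w`. -/
noncomputable def coxLength (n : ℕ) (w : Equiv.Perm (Fin n)) : ℕ :=
  sInf {k | ∃ l, IsWord n w l ∧ l.length = k}

/-- A reduced word for `w`: a word of minimal length. -/
def IsReducedWord (n : ℕ) (w : Equiv.Perm (Fin n)) (l : List ℕ) : Prop :=
  IsWord n w l ∧ l.length = coxLength n w

/-- A run: a nonempty word of consecutive integers, increasing or decreasing. -/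
def IsRun (r : List ℕ) : Prop :=
  r ≠ [] ∧ (List.Chain' (fun a b => b = a + 1) r ∨ List.Chain' (fun a b => a = b + 1) r)

/-- `run(w)`: the minimum number of runs whose concatenation is a reduced word of `w`. -/
noncomputable def runStat (n : ℕ) (w : Equiv.Perm (Fin n)) : ℕ :=
  sInf {k | ∃ rs : List (List ℕ), rs.length = k ∧ (∀ r ∈ rs, IsRun r) ∧
    IsReducedWord n w rs.flatten}

/-- One-line notation of `w`, with entries `1, …, n`. -/
def oneLine {n : ℕ} (w : Equiv.Perm (Fin n)) : List ℕ :=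
  List.ofFn (fun i => (w i : ℕ) + 1)

/-- Length of a longest increasing subsequence of the one-line notation of `w`. -/
noncomputable def lisLen {n : ℕ} (w : Equiv.Perm (Fin n)) : ℕ :=
  sSup {k | ∃ l : List ℕ, l.Sublist (oneLine w) ∧ l.Pairwise (· < ·) ∧ l.length = k}

/-- Schensted row insertion: insert `x` into row `r`, possibly bumping an entry. -/
def rowInsert (r : List ℕ) (x : ℕ) : List ℕ × Option ℕ :=
  match r.findIdx? (fun y => decide (x < y)) with
  | none => (r ++ [x], none)
  | some i => (r.set i x, r[i]?)

/-- Schensted insertion of `x` into a tableau (list of rows). -/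
def bumpInsert : List (List ℕ) → ℕ → List (List ℕ)
  | [], x => [[x]]
  | r :: rest, x =>
    match rowInsert r x with
    | (r', none) => r' :: rest
    | (r', some y) => r' :: bumpInsert rest y

/-- The RSK insertion tableau of a word. -/
def Ptab (w : List ℕ) : List (List ℕ) := w.foldl bumpInsert []

/-- The index of the row where the new box appeared, going from `p` to `p'`. -/
def recRow (p p' : List (List ℕ)) : ℕ :=
  (List.range p'.length).findIdx
    (fun j => decide ((p.getD j []).length < (p'.getD j []).length))

/-- Add entry `v` at the end of row `j` of `q`. -/
def addAt (q : List (List ℕ)) (j v : ℕ) : List (List ℕ) :=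
  if j < q.length then q.set j ((q.getD j []) ++ [v]) else q ++ [[v]]

/-- The RSK recording tableau of a word. -/
def Qtab (w : List ℕ) : List (List ℕ) :=
  ((w.zipIdx.map Prod.swap).foldl (fun pq ix =>
    let p' := bumpInsert pq.1 ix.2
    (p', addAt pq.2 (recRow pq.1 p') (ix.1 + 1))) (([], []) : List (List ℕ) × List (List ℕ))).2

/-- The second row of a tableau. -/
def Row2 (t : List (List ℕ)) : List ℕ := t.getD 1 []

/-- A set `L` of integers is uncrowded if every interval `[y, y+2x]` contains
at most `x+1` elements of `L`. -/
def Uncrowded (L : Set ℤ) : Prop :=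
  ∀ (y : ℤ) (x : ℕ), 0 < x → ({z : ℤ | y ≤ z ∧ z ≤ y + 2 * (x : ℤ)} ∩ L).ncard ≤ x + 1

/-- `w` is boolean: some reduced word of `w` has all distinct letters. -/
def BooleanPerm (n : ℕ) (w : Equiv.Perm (Fin n)) : Prop :=
  ∃ l, IsReducedWord n w l ∧ l.Nodup

/-- `w` avoids the pattern `321`. -/
def Avoids321 {n : ℕ} (w : Equiv.Perm (Fin n)) : Prop :=
  ¬ ∃ i j k : Fin n, i < j ∧ j < k ∧ w k < w j ∧ w j < w i

/-- `w` avoids the pattern `3412`. -/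
def Avoids3412 {n : ℕ} (w : Equiv.Perm (Fin n)) : Prop :=
  ¬ ∃ i j k l : Fin n, i < j ∧ j < k ∧ k < l ∧ w k < w l ∧ w l < w i ∧ w i < w j

/-- The support of `w`: the letters appearing in reduced words of `w`. -/
def Supp (n : ℕ) (w : Equiv.Perm (Fin n)) : Set ℕ :=
  {i | ∃ l, IsReducedWord n w l ∧ i ∈ l}

/-- The entries of a row, as a set of integers. -/
def entrySet (r : List ℕ) : Set ℤ := {z | ∃ x ∈ r, (x : ℤ) = z}

/-- `(r1, r2)` are the rows of a standard Young tableau of size `n` with at most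
two rows (entries `1, …, n`). -/
def IsSYT2 (n : ℕ) (r1 r2 : List ℕ) : Prop :=
  r1.Pairwise (· < ·) ∧ r2.Pairwise (· < ·) ∧ r2.length ≤ r1.length ∧
  (∀ i < r2.length, r1.getD i 0 < r2.getD i 0) ∧
  (r1 ++ r2).Perm (List.range' 1 n)

/-- The tableau (list of nonempty rows) with rows `r1`, `r2`. -/
def tab2 (r1 r2 : List ℕ) : List (List ℕ) :=
  if r2 = [] then (if r1 = [] then [] else [r1]) else [r1, r2]

/-- Every maximal block of `1`s (`true`s) in the binary word has odd length. -/
def OddBlocks (l : List Bool) : Prop :=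
  ∀ l₁ l₂ l₃ : List Bool, l = l₁ ++ l₂ ++ l₃ → l₂ ≠ [] → (∀ b ∈ l₂, b = true) →
    l₁.getLast? ≠ some true → l₃.head? ≠ some true → Odd l₂.length

/-
For `1 ≤ i < n`, every simple transposition other than `s_i` maps the initial segment
`{0, …, i - 1}` of `Fin n` onto itself, while `s_i` does not. Hence a word in which `i` occurs
exactly once cannot have the same product as a word avoiding `i`: every letter of a
repetition-free word of `w` occurs in every word of `w`. A reduced word has the same length as
the repetition-free one, so it contains each of those letters exactly once and nothing else.
-/

open Equiv

theorem List.Nodup.nodup_of_subset_of_length_le {α : Type*} {l l' : List α}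
    (hl : l.Nodup) (hsub : l ⊆ l') (hlen : l'.length ≤ l.length) : l'.Nodup := by
  classical
  have hcard : l.toFinset.card ≤ l'.toFinset.card :=
    Finset.card_le_card fun _ ha => List.mem_toFinset.2 (hsub (List.mem_toFinset.1 ha))
  rw [List.toFinset_card_of_nodup hl] at hcard
  exact Multiset.toFinset_card_eq_card_iff_nodup.1
    (le_antisymm (List.toFinset_card_le l') (hlen.trans hcard))

theorem IsWord.append {n : ℕ} {v w : Perm (Fin n)} {l l' : List ℕ} (hv : IsWord n v l)
    (hw : IsWord n w l') : IsWord n (v * w) (l ++ l') :=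
  ⟨fun i hi => (List.mem_append.1 hi).elim (hv.1 i) (hw.1 i), by
    rw [List.map_append, List.prod_append, hv.2, hw.2]⟩

theorem simpleT_succ {m : ℕ} (i : Fin m) :
    simpleT (m + 1) (i + 1) = swap i.castSucc i.succ := by
  rw [simpleT, dif_pos ⟨by omega, by omega⟩]
  rfl

theorem exists_isWord (n : ℕ) (w : Perm (Fin n)) : ∃ l, IsWord n w l := by
  cases n with
  | zero => exact ⟨[], by simp [IsWord, Subsingleton.elim w 1]⟩
  | succ m =>
    have hw : w ∈ Submonoid.closure (Set.range fun i : Fin m ↦ swap i.castSucc i.succ) := by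
      rw [Perm.mclosure_swap_castSucc_succ]; trivial
    induction hw using Submonoid.closure_induction with
    | mem _ hs =>
      obtain ⟨i, rfl⟩ := hs
      exact ⟨[i + 1], by simp, by simp [simpleT_succ]⟩
    | one => exact ⟨[], by simp [IsWord]⟩
    | mul _ _ _ _ hv hw =>
      exact hv.elim fun l hl => hw.elim fun l' hl' => ⟨l ++ l', hl.append hl'⟩

theorem exists_isReducedWord (n : ℕ) (w : Perm (Fin n)) : ∃ l, IsReducedWord n w l := by
  obtain ⟨l, hl⟩ := exists_isWord n w
  exact Nat.sInf_mem (s := {k | ∃ l, IsWord n w l ∧ l.length = k}) ⟨_, l, hl, rfl⟩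

def initialSegmentStabilizer (n i : ℕ) : Subgroup (Perm (Fin n)) where
  carrier := {w | ∀ x, (w x : ℕ) < i ↔ (x : ℕ) < i}
  mul_mem' hv hw x := (hv _).trans (hw x)
  one_mem' _ := Iff.rfl
  inv_mem' {w} hw x := by simpa using (hw (w⁻¹ x)).symm

theorem simpleT_mem_initialSegmentStabilizer {n i j : ℕ} (hij : j ≠ i) :
    simpleT n j ∈ initialSegmentStabilizer n i := by
  unfold simpleT
  split_ifs with hj
  · intro x
    rw [swap_apply_def]
    split_ifs <;> simp_all [Fin.ext_iff] <;> omega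
  · exact one_mem _

theorem simpleT_notMem_initialSegmentStabilizer {n i : ℕ} (hi : 1 ≤ i ∧ i < n) :
    simpleT n i ∉ initialSegmentStabilizer n i := fun h => by
  have := h ⟨i - 1, by omega⟩
  rw [simpleT, dif_pos hi, swap_apply_left] at this
  simp only at this
  omega

theorem IsWord.mem_initialSegmentStabilizer {n i : ℕ} {w : Perm (Fin n)} {l : List ℕ}
    (hw : IsWord n w l) (hi : i ∉ l) : w ∈ initialSegmentStabilizer n i := by
  rw [← hw.2]
  refine Subgroup.list_prod_mem _ fun s hs => ?_
  obtain ⟨j, hj, rfl⟩ := List.mem_map.1 hs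
  exact simpleT_mem_initialSegmentStabilizer fun h => hi (h ▸ hj)

theorem IsWord.notMem_initialSegmentStabilizer {n i : ℕ} {w : Perm (Fin n)} {l₁ l₂ : List ℕ}
    (hw : IsWord n w (l₁ ++ i :: l₂)) (h₁ : i ∉ l₁) (h₂ : i ∉ l₂) :
    w ∉ initialSegmentStabilizer n i := fun h => by
  set S := initialSegmentStabilizer n i
  have hP : (l₁.map (simpleT n)).prod ∈ S :=
    IsWord.mem_initialSegmentStabilizer ⟨fun j hj => hw.1 j (by simp [hj]), rfl⟩ h₁
  have hQ : (l₂.map (simpleT n)).prod ∈ S :=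
    IsWord.mem_initialSegmentStabilizer ⟨fun j hj => hw.1 j (by simp [hj]), rfl⟩ h₂
  have hsi : simpleT n i = (l₁.map (simpleT n)).prod⁻¹ * w * (l₂.map (simpleT n)).prod⁻¹ := by
    rw [← hw.2]; simp [mul_assoc]
  exact simpleT_notMem_initialSegmentStabilizer (hw.1 i (by simp))
    (hsi ▸ mul_mem (mul_mem (inv_mem hP) h) (inv_mem hQ))

theorem IsWord.subset_of_nodup {n : ℕ} {w : Perm (Fin n)} {l l' : List ℕ} (hl : IsWord n w l)
    (hnd : l.Nodup) (hl' : IsWord n w l') : l ⊆ l' := by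
  intro i hi
  by_contra hi'
  obtain ⟨l₁, l₂, rfl⟩ := List.append_of_mem hi
  rw [List.nodup_append, List.nodup_cons] at hnd
  exact hl.notMem_initialSegmentStabilizer (fun h => hnd.2.2 i h i (by simp) rfl) hnd.2.1.1
    (hl'.mem_initialSegmentStabilizer hi')

theorem stmt5 (n : ℕ) (w : Equiv.Perm (Fin n)) :
    BooleanPerm n w ↔ ∀ l, IsReducedWord n w l → l.Nodup := by
  constructor
  · rintro ⟨l, hl, hnd⟩ l' hl'
    exact hnd.nodup_of_subset_of_length_le (hl.1.subset_of_nodup hnd hl'.1)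
      (by rw [hl.2, hl'.2])
  · intro h
    obtain ⟨l, hl⟩ := exists_isReducedWord n w
    exact ⟨l, hl, h l hl⟩
end

section
/- A permutation w in S_n has a reduced word with all distinct letters if and only if w avoids both of the patterns 321 and 3412. -/
/-!
A letter `d` occurs in every word of `w` as soon as `w` does not map `{0, …, d-1}` onto itself,
since every other generator does; so a word with distinct letters is automatically reduced.

If `w` lies in the Young subgroup `S_d × S_{n-d}`, then `w` and `s_d w` induce the same relative
order on each side of the cut `d`, and `s_d w` has a single inversion across the cut. An occurrence
of `321` or `3412` straddling a cut has at least two inversions across it, so pattern avoidance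
passes between `w` and `s_d w`. Peeling off letters of a word with distinct letters one at a time
gives one direction. Conversely, if `w` avoids both patterns and `x` is its smallest non-fixed
point, then `w x = x + 1` or `w⁻¹ x = x + 1`; so `w` or `w⁻¹` is `s_{x+1}` times a pattern-avoiding
permutation fixing `0, …, x`, and induction on the number of fixed initial points builds the word.
-/

open Equiv

section
variable {n : ℕ}

lemma simpleT_apply_val {d : ℕ} (hd : 1 ≤ d ∧ d < n) (v : Fin n) :
    (simpleT n d v : ℕ) = if (v : ℕ) = d - 1 then d else if (v : ℕ) = d then d - 1 else v := by
  rcases v with ⟨v, hv⟩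
  simp only [simpleT, dif_pos hd, swap_apply_def, Fin.ext_iff]
  split_ifs <;> simp_all

@[simp]
lemma simpleT_mul_self (d : ℕ) : simpleT n d * simpleT n d = 1 := by
  unfold simpleT
  split_ifs <;> simp

lemma simpleT_mul_simpleT_mul (d : ℕ) (w : Perm (Fin n)) :
    simpleT n d * (simpleT n d * w) = w := by
  rw [← mul_assoc, simpleT_mul_self, one_mul]

lemma simpleT_inv (d : ℕ) : (simpleT n d)⁻¹ = simpleT n d :=
  inv_eq_of_mul_eq_one_right (simpleT_mul_self d)

lemma list_prod_reverse_map_simpleT (l : List ℕ) :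
    (l.reverse.map (simpleT n)).prod = (l.map (simpleT n)).prod⁻¹ := by
  simp [List.prod_inv_reverse, Function.comp_def, simpleT_inv]

lemma simpleT_lt_simpleT_iff {d : ℕ} (hd : 1 ≤ d ∧ d < n) {a b : Fin n}
    (hab : (a : ℕ) < d ↔ (b : ℕ) < d) : simpleT n d a < simpleT n d b ↔ a < b := by
  rw [Fin.lt_def, Fin.lt_def, simpleT_apply_val hd, simpleT_apply_val hd]
  split_ifs <;> omega

/-- The Young subgroup `S_d × S_{n-d}`. -/
def cutStabilizer (n d : ℕ) : Subgroup (Perm (Fin n)) where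
  carrier := {w | ∀ x, (w x : ℕ) < d ↔ (x : ℕ) < d}
  mul_mem' hu hv x := (hu _).trans (hv x)
  one_mem' _ := Iff.rfl
  inv_mem' {w} hw x := by simpa using (hw (w⁻¹ x)).symm

lemma mem_cutStabilizer_of_forall_lt {d : ℕ} {w : Perm (Fin n)}
    (hfix : ∀ x : Fin n, (x : ℕ) < d → w x = x) : w ∈ cutStabilizer n d := by
  intro x
  constructor
  · intro h
    rwa [w.injective (hfix (w x) h)] at h
  · intro h
    rwa [hfix x h]

lemma simpleT_mem_cutStabilizer {d i : ℕ} (h : d ≠ i) : simpleT n d ∈ cutStabilizer n i := by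
  by_cases hd : 1 ≤ d ∧ d < n
  · intro x
    rw [simpleT_apply_val hd]
    split_ifs <;> omega
  · simp only [simpleT, dif_neg hd]
    exact one_mem _

lemma list_prod_mem_cutStabilizer {l : List ℕ} {i : ℕ} (hi : i ∉ l) :
    (l.map (simpleT n)).prod ∈ cutStabilizer n i :=
  Subgroup.list_prod_mem _ <| by
    simpa using fun d hd => simpleT_mem_cutStabilizer (ne_of_mem_of_not_mem hd hi)

lemma simpleT_mul_notMem_cutStabilizer {d : ℕ} (hd : 1 ≤ d ∧ d < n) {w : Perm (Fin n)}
    (hw : w ∈ cutStabilizer n d) : simpleT n d * w ∉ cutStabilizer n d := by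
  intro h
  have hpos := ((cutStabilizer n d).inv_mem hw ⟨d - 1, by omega⟩).2 (by simp; omega)
  have := (h (w⁻¹ ⟨d - 1, by omega⟩)).2 hpos
  simp [simpleT_apply_val hd] at this

lemma list_prod_notMem_cutStabilizer {l : List ℕ} (hl : l.Nodup) (hv : ∀ j ∈ l, 1 ≤ j ∧ j < n)
    {i : ℕ} (hi : i ∈ l) : (l.map (simpleT n)).prod ∉ cutStabilizer n i := by
  induction l with
  | nil => simp at hi
  | cons d l ih =>
    rw [List.nodup_cons] at hl
    rw [List.map_cons, List.prod_cons]
    rcases List.mem_cons.1 hi with rfl | hi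
    · exact simpleT_mul_notMem_cutStabilizer (hv _ List.mem_cons_self)
        (list_prod_mem_cutStabilizer hl.1)
    · rw [Subgroup.mul_mem_cancel_left _
        (simpleT_mem_cutStabilizer (ne_of_mem_of_not_mem hi hl.1).symm)]
      exact ih hl.2 (fun j hj => hv j (List.mem_cons_of_mem _ hj)) hi

lemma IsWord.mem_of_notMem_cutStabilizer {w : Perm (Fin n)} {l : List ℕ} (hl : IsWord n w l)
    {i : ℕ} (hw : w ∉ cutStabilizer n i) : i ∈ l := by
  by_contra hi
  exact hw (hl.2 ▸ list_prod_mem_cutStabilizer hi)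

theorem isReducedWord_of_nodup {w : Perm (Fin n)} {l : List ℕ} (hw : IsWord n w l)
    (hl : l.Nodup) : IsReducedWord n w l := by
  refine ⟨hw, le_antisymm (le_csInf ⟨_, l, hw, rfl⟩ ?_) (Nat.sInf_le ⟨l, hw, rfl⟩)⟩
  rintro _ ⟨l₀, hl₀, rfl⟩
  have hsub : l.toFinset ⊆ l₀.toFinset := fun i hi => by
    rw [List.mem_toFinset] at hi ⊢
    exact hl₀.mem_of_notMem_cutStabilizer (hw.2 ▸ list_prod_notMem_cutStabilizer hl hw.1 hi)
  calc l.length = l.toFinset.card := (List.toFinset_card_of_nodup hl).symm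
    _ ≤ l₀.toFinset.card := Finset.card_le_card hsub
    _ ≤ l₀.length := List.toFinset_card_le l₀

def crossInversions (d : ℕ) (u : Perm (Fin n)) : Set (Fin n × Fin n) :=
  {p | (p.1 : ℕ) < d ∧ d ≤ (p.2 : ℕ) ∧ u p.2 < u p.1}

lemma crossInversions_eq_empty {d : ℕ} {w : Perm (Fin n)} (hw : w ∈ cutStabilizer n d) :
    crossInversions d w = ∅ := by
  ext ⟨x, y⟩
  have := hw x
  have := hw y
  simp only [crossInversions, Set.mem_ofPred_eq, Set.mem_empty_iff_false, iff_false, Fin.lt_def]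
  omega

lemma crossInversions_simpleT_mul_subset {d : ℕ} (hd : 1 ≤ d ∧ d < n) {w : Perm (Fin n)}
    (hw : w ∈ cutStabilizer n d) :
    crossInversions d (simpleT n d * w) ⊆ {(w⁻¹ ⟨d - 1, by omega⟩, w⁻¹ ⟨d, hd.2⟩)} := by
  rintro ⟨x, y⟩ ⟨hx, hy, hlt⟩
  dsimp only at hx hy hlt
  rw [Perm.mul_apply, Perm.mul_apply, Fin.lt_def, simpleT_apply_val hd, simpleT_apply_val hd] at hlt
  have := hw x
  have := hw y
  simp only [Set.mem_singleton_iff, Prod.mk.injEq, Perm.eq_inv_iff_eq, Fin.ext_iff]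
  split_ifs at hlt <;> omega

lemma Avoids321.of_sides {u v : Perm (Fin n)} {d : ℕ} (hv : Avoids321 v)
    (hside : ∀ x y : Fin n, ((x : ℕ) < d ↔ (y : ℕ) < d) → (u x < u y ↔ v x < v y))
    (hcross : (crossInversions d u).Subsingleton) : Avoids321 u := by
  rintro ⟨i, j, k, hij, hjk, hkj, hji⟩
  have hi := Fin.lt_def.1 hij
  have hk := Fin.lt_def.1 hjk
  by_cases hs : (i : ℕ) < d ↔ (k : ℕ) < d
  · exact hv ⟨i, j, k, hij, hjk, (hside k j (by omega)).1 hkj, (hside j i (by omega)).1 hji⟩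
  have hid : (i : ℕ) < d := by omega
  have hkd : d ≤ (k : ℕ) := by omega
  by_cases hjd : (j : ℕ) < d
  · exact hij.ne (congrArg Prod.fst
      (@hcross (i, k) ⟨hid, hkd, hkj.trans hji⟩ (j, k) ⟨hjd, hkd, hkj⟩))
  · exact hjk.ne (congrArg Prod.snd
      (@hcross (i, j) ⟨hid, not_lt.1 hjd, hji⟩ (i, k) ⟨hid, hkd, hkj.trans hji⟩))

lemma Avoids3412.of_sides {u v : Perm (Fin n)} {d : ℕ} (hv : Avoids3412 v)
    (hside : ∀ x y : Fin n, ((x : ℕ) < d ↔ (y : ℕ) < d) → (u x < u y ↔ v x < v y))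
    (hcross : (crossInversions d u).Subsingleton) : Avoids3412 u := by
  rintro ⟨i, j, k, l, hij, hjk, hkl, hkl', hli, hij'⟩
  have := Fin.lt_def.1 hij
  have := Fin.lt_def.1 hjk
  have := Fin.lt_def.1 hkl
  by_cases hs : (i : ℕ) < d ↔ (l : ℕ) < d
  · exact hv ⟨i, j, k, l, hij, hjk, hkl, (hside k l (by omega)).1 hkl',
      (hside l i (by omega)).1 hli, (hside i j (by omega)).1 hij'⟩
  have hid : (i : ℕ) < d := by omega
  have hld : d ≤ (l : ℕ) := by omega
  by_cases hjd : (j : ℕ) < d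
  · by_cases hkd : (k : ℕ) < d
    · exact hij.ne (congrArg Prod.fst
        (@hcross (i, l) ⟨hid, hld, hli⟩ (j, l) ⟨hjd, hld, hli.trans hij'⟩))
    · exact hij.ne (congrArg Prod.fst (@hcross (i, k) ⟨hid, not_lt.1 hkd, hkl'.trans hli⟩
        (j, k) ⟨hjd, not_lt.1 hkd, (hkl'.trans hli).trans hij'⟩))
  · have hkd : d ≤ (k : ℕ) := by omega
    exact hkl.ne (congrArg Prod.snd
      (@hcross (i, k) ⟨hid, hkd, hkl'.trans hli⟩ (i, l) ⟨hid, hld, hli⟩))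

lemma simpleT_mul_lt_simpleT_mul_iff {d : ℕ} (hd : 1 ≤ d ∧ d < n) {w : Perm (Fin n)}
    (hw : w ∈ cutStabilizer n d) {x y : Fin n} (hxy : (x : ℕ) < d ↔ (y : ℕ) < d) :
    (simpleT n d * w) x < (simpleT n d * w) y ↔ w x < w y :=
  simpleT_lt_simpleT_iff hd ((hw x).trans (hxy.trans (hw y).symm))

theorem avoids_simpleT_mul {d : ℕ} (hd : 1 ≤ d ∧ d < n) {w : Perm (Fin n)}
    (hw : w ∈ cutStabilizer n d) (h : Avoids321 w ∧ Avoids3412 w) :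
    Avoids321 (simpleT n d * w) ∧ Avoids3412 (simpleT n d * w) :=
  have hside x y := simpleT_mul_lt_simpleT_mul_iff hd hw (x := x) (y := y)
  have hcross := Set.subsingleton_singleton.anti (crossInversions_simpleT_mul_subset hd hw)
  ⟨h.1.of_sides hside hcross, h.2.of_sides hside hcross⟩

theorem avoids_of_simpleT_mul {d : ℕ} (hd : 1 ≤ d ∧ d < n) {w : Perm (Fin n)}
    (hw : w ∈ cutStabilizer n d)
    (h : Avoids321 (simpleT n d * w) ∧ Avoids3412 (simpleT n d * w)) :
    Avoids321 w ∧ Avoids3412 w :=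
  have hside x y hxy := (simpleT_mul_lt_simpleT_mul_iff hd hw (x := x) (y := y) hxy).symm
  have hcross : (crossInversions d w).Subsingleton := by
    rw [crossInversions_eq_empty hw]
    exact Set.subsingleton_empty
  ⟨h.1.of_sides hside hcross, h.2.of_sides hside hcross⟩

lemma avoids321_one : Avoids321 (1 : Perm (Fin n)) :=
  fun ⟨_, _, _, hij, hjk, hkj, hji⟩ => (hkj.trans hji).asymm (hij.trans hjk)

lemma avoids3412_one : Avoids3412 (1 : Perm (Fin n)) :=
  fun ⟨_, _, _, _, hij, hjk, hkl, _, hli, _⟩ => hli.asymm ((hij.trans hjk).trans hkl)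

lemma Avoids321.inv {w : Perm (Fin n)} (h : Avoids321 w) : Avoids321 w⁻¹ :=
  fun ⟨i, j, k, hij, hjk, hkj, hji⟩ =>
    h ⟨w⁻¹ k, w⁻¹ j, w⁻¹ i, hkj, hji, by simpa using hij, by simpa using hjk⟩

lemma Avoids3412.inv {w : Perm (Fin n)} (h : Avoids3412 w) : Avoids3412 w⁻¹ :=
  fun ⟨i, j, k, l, hij, hjk, hkl, hkl', hli, hij'⟩ =>
    h ⟨w⁻¹ k, w⁻¹ l, w⁻¹ i, w⁻¹ j, hkl', hli, hij', by simpa using hij, by simpa using hjk,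
      by simpa using hkl⟩

theorem avoids_of_nodup {l : List ℕ} (hl : l.Nodup) (hv : ∀ j ∈ l, 1 ≤ j ∧ j < n) :
    Avoids321 (l.map (simpleT n)).prod ∧ Avoids3412 (l.map (simpleT n)).prod := by
  induction l with
  | nil => exact ⟨avoids321_one, avoids3412_one⟩
  | cons d l ih =>
    rw [List.nodup_cons] at hl
    rw [List.map_cons, List.prod_cons]
    exact avoids_simpleT_mul (hv d List.mem_cons_self) (list_prod_mem_cutStabilizer hl.1)
      (ih hl.2 fun j hj => hv j (List.mem_cons_of_mem _ hj))

lemma apply_eq_succ_or_inv_apply_eq_succ {w : Perm (Fin n)} {x : Fin n}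
    (hfix : ∀ y : Fin n, (y : ℕ) < x → w y = y) (hx : w x ≠ x)
    (h321 : Avoids321 w) (h3412 : Avoids3412 w) :
    (w x : ℕ) = x + 1 ∨ (w⁻¹ x : ℕ) = x + 1 := by
  have hw := mem_cutStabilizer_of_forall_lt hfix
  have val_inj {a c : Fin n} : (w a : ℕ) = w c ↔ (a : ℕ) = c := by
    rw [← Fin.ext_iff, ← Fin.ext_iff, w.injective.eq_iff]
  -- Otherwise value `x` sits at some `u > x + 1` and value `x + 1` at some `b`: if `b < u` then
  -- `x < b < u` is a `321`, and if `u < b` then `x < x + 1 < u < b` is a `321` or a `3412`.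
  by_contra! ⟨hwx, hux⟩
  have hwx' : (w x : ℕ) ≠ x := fun h => hx (Fin.ext h)
  let x₁ : Fin n := ⟨x + 1, by have := (w x).isLt; have := hw x; omega⟩
  let u := w⁻¹ x
  let b := w⁻¹ x₁
  have hwu : (w u : ℕ) = x := by simp [u]
  have hwb : (w b : ℕ) = x + 1 := by simp [b, x₁]
  have := hw x
  have := hw u
  have := hw b
  have := hw x₁
  have := @val_inj x u
  have := @val_inj x b
  have := @val_inj u b
  have := @val_inj x₁ u
  have := @val_inj x₁ b
  have := @val_inj x x₁
  have hx₁ : (x₁ : ℕ) = x + 1 := rfl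
  rcases lt_or_gt_of_ne (show (b : ℕ) ≠ u by omega) with hbu | hub
  · exact h321 ⟨x, b, u, Fin.lt_def.2 (by omega), Fin.lt_def.2 hbu, Fin.lt_def.2 (by omega),
      Fin.lt_def.2 (by omega)⟩
  rcases lt_or_gt_of_ne (show (w x : ℕ) ≠ w x₁ by omega) with hlt | hgt
  · exact h3412 ⟨x, x₁, u, b, Fin.lt_def.2 (by omega), Fin.lt_def.2 (by omega), Fin.lt_def.2 hub,
      Fin.lt_def.2 (by omega), Fin.lt_def.2 (by omega), Fin.lt_def.2 hlt⟩
  · exact h321 ⟨x, x₁, u, Fin.lt_def.2 (by omega), Fin.lt_def.2 (by omega),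
      Fin.lt_def.2 (by omega), Fin.lt_def.2 hgt⟩

lemma simpleT_succ_mul_apply_of_lt {w : Perm (Fin n)} {x : Fin n}
    (hfix : ∀ y : Fin n, (y : ℕ) < x → w y = y) (hwx : (w x : ℕ) = x + 1) :
    ∀ y : Fin n, (y : ℕ) < x + 1 → (simpleT n (x + 1) * w) y = y := by
  have hd : 1 ≤ (x : ℕ) + 1 ∧ (x : ℕ) + 1 < n := ⟨by omega, hwx ▸ (w x).isLt⟩
  intro y hy
  apply Fin.ext
  rw [Perm.mul_apply, simpleT_apply_val hd]
  rcases Nat.lt_succ_iff_lt_or_eq.1 hy with hy | hy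
  · rw [hfix y hy]
    split_ifs <;> omega
  · rw [Fin.ext hy, hwx]
    simp

theorem exists_nodup_word_of_avoids (k : ℕ) (w : Perm (Fin n))
    (hfix : ∀ y : Fin n, (y : ℕ) < k → w y = y) (h321 : Avoids321 w) (h3412 : Avoids3412 w) :
    ∃ l, IsWord n w l ∧ l.Nodup ∧ ∀ i ∈ l, k < i := by
  by_cases hk : n ≤ k
  · refine ⟨[], ⟨by simp, ?_⟩, List.nodup_nil, by simp⟩
    ext y
    simp [hfix y (by omega)]
  let x : Fin n := ⟨k, by omega⟩
  by_cases hx : w x = x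
  · have hfix' (y : Fin n) (hy : (y : ℕ) < k + 1) : w y = y := by
      rcases Nat.lt_succ_iff_lt_or_eq.1 hy with hy | hy
      · exact hfix y hy
      · rwa [show y = x from Fin.ext hy]
    obtain ⟨l, hl, hnd, hlk⟩ := exists_nodup_word_of_avoids (k + 1) w hfix' h321 h3412
    exact ⟨l, hl, hnd, fun i hi => (hlk i hi).trans' k.lt_succ_self⟩
  have of_apply_eq_succ (v : Perm (Fin n)) (hvfix : ∀ y : Fin n, (y : ℕ) < k → v y = y)
      (hvx : (v x : ℕ) = k + 1) (h321 : Avoids321 v) (h3412 : Avoids3412 v) :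
      ∃ l, IsWord n v l ∧ l.Nodup ∧ ∀ i ∈ l, k < i := by
    have hd : 1 ≤ k + 1 ∧ k + 1 < n := ⟨by omega, hvx ▸ (v x).isLt⟩
    have hfix' := simpleT_succ_mul_apply_of_lt hvfix hvx
    obtain ⟨h321', h3412'⟩ := avoids_of_simpleT_mul hd (mem_cutStabilizer_of_forall_lt hfix')
      (by rw [simpleT_mul_simpleT_mul]; exact ⟨h321, h3412⟩)
    obtain ⟨l, ⟨hlv, hlprod⟩, hnd, hlk⟩ :=
      exists_nodup_word_of_avoids (k + 1) _ hfix' h321' h3412'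
    refine ⟨(k + 1) :: l, ⟨?_, ?_⟩, List.nodup_cons.2 ⟨fun h => (hlk _ h).false, hnd⟩, ?_⟩
    · simpa [hd] using hlv
    · rw [List.map_cons, List.prod_cons, hlprod, simpleT_mul_simpleT_mul]
    · simpa using fun i hi => (hlk i hi).trans' k.lt_succ_self
  rcases apply_eq_succ_or_inv_apply_eq_succ hfix hx h321 h3412 with h | h
  · exact of_apply_eq_succ w hfix h h321 h3412
  · have hinvfix (y : Fin n) (hy : (y : ℕ) < k) : w⁻¹ y = y := by
      rw [Perm.inv_eq_iff_eq, hfix y hy]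
    obtain ⟨l, ⟨hlv, hlprod⟩, hnd, hlk⟩ := of_apply_eq_succ w⁻¹ hinvfix h h321.inv h3412.inv
    refine ⟨l.reverse, ⟨by simpa using hlv, ?_⟩, List.nodup_reverse.2 hnd, by simpa using hlk⟩
    rw [list_prod_reverse_map_simpleT, hlprod, inv_inv]
termination_by n - k

end

theorem stmt6 (n : ℕ) (w : Equiv.Perm (Fin n)) :
    (∃ l, IsReducedWord n w l ∧ l.Nodup) ↔ (Avoids321 w ∧ Avoids3412 w) := by
  constructor
  · rintro ⟨l, ⟨⟨hv, rfl⟩, -⟩, hl⟩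
    exact avoids_of_nodup hl hv
  · rintro ⟨h321, h3412⟩
    obtain ⟨l, hw, hl, -⟩ :=
      exists_nodup_word_of_avoids 0 w (fun _ h => (Nat.not_lt_zero _ h).elim) h321 h3412
    exact ⟨l, isReducedWord_of_nodup hw hl, hl⟩
end
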